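/- Let p ∈ ℕ, let A: ℝ → M_p(ℝ) be a Lipschitz continuous matrix-valued function with Lipschitz constant L_A (with respect to the spectral norm), let s < 0, and suppose there exist γ̃, λ̃ > 0 such that ‖exp(−ν·A(w)·s)‖ ≤ γ̃·e^{νλ̃s} for all ν ∈ [0,1] and all w ∈ ℝ. Then for all u, v ∈ ℝ: ‖exp(−A(u)·s) − exp(−A(v)·s)‖ ≤ L_A·γ̃²·|s|·e^{λ̃ s}·|u−v|. -/

import Mathlib

open scoped Matrix.Norms.L2Operator NNReal

/-!
The path `ν ↦ e^{νX} e^{(1-ν)Y}` runs from `e^Y` to `e^X` with derivative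
`e^{νX} (X - Y) e^{(1-ν)Y}`, so the mean value inequality on `[0, 1]` bounds `‖e^X - e^Y‖` by
`‖X - Y‖ · sup_ν ‖e^{νX}‖ ‖e^{(1-ν)Y}‖`. For `X = -s A(u)`, `Y = -s A(v)` the assumed bound makes
the exponents `νλ̃s` and `(1-ν)λ̃s` add up to `λ̃s`, and Lipschitz continuity bounds `‖X - Y‖`.
-/

open NormedSpace Set

section ExpDifference

variable {𝔸 : Type*} [NormedRing 𝔸] [NormedAlgebra ℝ 𝔸] [CompleteSpace 𝔸]

theorem hasDerivAt_exp_smul_mul_exp_one_sub_smul (X Y : 𝔸) (ν : ℝ) :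
    HasDerivAt (fun t : ℝ => exp (t • X) * exp ((1 - t) • Y))
      (exp (ν • X) * (X - Y) * exp ((1 - ν) • Y)) ν := by
  have hY : HasDerivAt (fun t : ℝ => exp ((1 - t) • Y))
      ((-1 : ℝ) • (Y * exp ((1 - ν) • Y))) ν :=
    (hasDerivAt_exp_smul_const' Y (1 - ν)).scomp ν ((hasDerivAt_id ν).const_sub 1)
  refine ((hasDerivAt_exp_smul_const X ν).mul hY).congr_deriv ?_
  rw [neg_one_smul]
  noncomm_ring

theorem norm_exp_sub_exp_le {X Y : 𝔸} {C : ℝ}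
    (h : ∀ ν ∈ Icc (0 : ℝ) 1, ‖exp (ν • X)‖ * ‖exp ((1 - ν) • Y)‖ ≤ C) :
    ‖exp X - exp Y‖ ≤ ‖X - Y‖ * C := by
  have hderiv := fun ν (_ : ν ∈ Icc (0 : ℝ) 1) =>
    (hasDerivAt_exp_smul_mul_exp_one_sub_smul X Y ν).hasDerivWithinAt (s := Icc 0 1)
  have hbound : ∀ ν ∈ Ico (0 : ℝ) 1,
      ‖exp (ν • X) * (X - Y) * exp ((1 - ν) • Y)‖ ≤ ‖X - Y‖ * C := fun ν hν =>
    calc ‖exp (ν • X) * (X - Y) * exp ((1 - ν) • Y)‖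
        ≤ ‖X - Y‖ * (‖exp (ν • X)‖ * ‖exp ((1 - ν) • Y)‖) := by
          refine norm_mul₃_le.trans_eq ?_
          ring
      _ ≤ ‖X - Y‖ * C := by gcongr; exact h ν (Ico_subset_Icc_self hν)
  simpa using norm_image_sub_le_of_norm_deriv_le_segment_01' hderiv hbound

end ExpDifference

theorem matrix_exp_lipschitz_in_parameter_general
    (p : ℕ) (A : ℝ → Matrix (Fin p) (Fin p) ℝ)
    (LA : ℝ≥0) (hA : LipschitzWith LA A)
    (s : ℝ)
    (γ' lam' : ℝ)
    (hbound : ∀ (w : ℝ) (ν : ℝ), ν ∈ Set.Icc (0 : ℝ) 1 →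
      ‖NormedSpace.exp ((-(ν * s)) • A w)‖ ≤ γ' * Real.exp (ν * lam' * s)) :
    ∀ u v : ℝ,
      ‖NormedSpace.exp ((-s) • A u) - NormedSpace.exp ((-s) • A v)‖ ≤
        (LA : ℝ) * γ' ^ 2 * |s| * Real.exp (lam' * s) * |u - v| := by
  intro u v
  have hexp_product : ∀ ν ∈ Icc (0 : ℝ) 1,
      ‖exp (ν • (-s) • A u)‖ * ‖exp ((1 - ν) • (-s) • A v)‖ ≤ γ' ^ 2 * Real.exp (lam' * s) := by
    intro ν hν
    have h₁ := hbound u ν hν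
    have h₂ := hbound v (1 - ν) ⟨by linarith [hν.2], by linarith [hν.1]⟩
    rw [smul_smul, smul_smul, mul_neg, mul_neg]
    calc _ ≤ γ' * Real.exp (ν * lam' * s) * (γ' * Real.exp ((1 - ν) * lam' * s)) :=
          mul_le_mul h₁ h₂ (norm_nonneg _) ((norm_nonneg _).trans h₁)
      _ = γ' ^ 2 * Real.exp (lam' * s) := by rw [mul_mul_mul_comm, ← Real.exp_add]; ring_nf
  have hdiff : ‖(-s) • A u - (-s) • A v‖ ≤ |s| * (LA * |u - v|) := by
    rw [← smul_sub, norm_smul, Real.norm_eq_abs, abs_neg]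
    gcongr
    exact hA.norm_sub_le u v
  calc _ ≤ ‖(-s) • A u - (-s) • A v‖ * (γ' ^ 2 * Real.exp (lam' * s)) := norm_exp_sub_exp_le hexp_product
    _ ≤ |s| * (LA * |u - v|) * (γ' ^ 2 * Real.exp (lam' * s)) := by gcongr
    _ = _ := by ring

/-- Matrix exponential estimate from the proof of Corollary 5.7: if `A` is
Lipschitz (spectral norm) and `‖exp(-νA(w)s)‖ ≤ γ̃ e^{νλ̃s}` uniformly in
`w ∈ ℝ` and `ν ∈ [0,1]`, then
`‖exp(-A(u)s) - exp(-A(v)s)‖ ≤ L_A γ̃² |s| e^{λ̃ s} |u - v|`. -/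
theorem matrix_exp_lipschitz_in_parameter
    (p : ℕ) (A : ℝ → Matrix (Fin p) (Fin p) ℝ)
    (LA : ℝ≥0) (hA : LipschitzWith LA A)
    (s : ℝ) (hs : s < 0)
    (γ' lam' : ℝ) (hγ' : 0 < γ') (hlam' : 0 < lam')
    (hbound : ∀ (w : ℝ) (ν : ℝ), ν ∈ Set.Icc (0 : ℝ) 1 →
      ‖NormedSpace.exp ((-(ν * s)) • A w)‖ ≤ γ' * Real.exp (ν * lam' * s)) :
    ∀ u v : ℝ,
      ‖NormedSpace.exp ((-s) • A u) - NormedSpace.exp ((-s) • A v)‖ ≤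
        (LA : ℝ) * γ' ^ 2 * |s| * Real.exp (lam' * s) * |u - v| :=
  matrix_exp_lipschitz_in_parameter_general p A LA hA s γ' lam' hbound
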